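/- Let r be an odd integer at least 3 and let n be an integer with n ≥ r − 1. Then (c_{n−r+2} − 1)^{(2^r − 1)n − 1} > 2^{2^n}. In particular (taking r = 3), for every integer n ≥ 2, (c_{n−1} − 1)^{7n − 1} > 2^{2^n}. -/
import Mathlib


/-- Sylvester's sequence: `c 0 = 2` and `c (m+1) = c m * (c m - 1) + 1`. -/
def sylvester : ℕ → ℕ
  | 0 => 2
  | m + 1 => sylvester m * (sylvester m - 1) + 1

lemma sylvester_two_le : ∀ m, 2 ≤ sylvester m
  | 0 => le_refl 2
  | m + 1 => by
    have h := sylvester_two_le m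
    simp only [sylvester]
    have h1 : 1 ≤ sylvester m - 1 := by omega
    have := Nat.mul_le_mul h h1
    omega

lemma sylvester_lower : ∀ m, 2 ^ 2 ^ m ≤ sylvester (m + 1) - 1
  | 0 => by norm_num [sylvester]
  | m + 1 => by
    have ih := sylvester_lower m
    have heq : sylvester (m + 1 + 1) - 1 = sylvester (m+1) * (sylvester (m+1) - 1) := by
      simp [sylvester]
    rw [heq]
    have h3 : sylvester (m+1) - 1 ≤ sylvester (m+1) := Nat.sub_le _ _
    calc 2 ^ 2 ^ (m+1) = (2 ^ 2 ^ m) * (2 ^ 2 ^ m) := by rw [pow_succ, pow_mul]; ring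
      _ ≤ sylvester (m+1) * (sylvester (m+1) - 1) :=
          Nat.mul_le_mul (ih.trans h3) ih

/-- For `r` odd with `r ≥ 3` and `n ≥ r − 1`,
`(c (n+2−r) − 1)^((2^r − 1)·n − 1) > 2^(2^n)`; in particular (taking `r = 3`),
for every `n ≥ 2`, `(c (n−1) − 1)^(7n − 1) > 2^(2^n)`. -/
theorem sylvester_doubly_exponential_bound :
    (∀ r n : ℕ, Odd r → 3 ≤ r → r - 1 ≤ n →
      2 ^ 2 ^ n < (sylvester (n + 2 - r) - 1) ^ ((2 ^ r - 1) * n - 1)) ∧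
    (∀ n : ℕ, 2 ≤ n → 2 ^ 2 ^ n < (sylvester (n - 1) - 1) ^ (7 * n - 1)) := by
  have main : ∀ r n : ℕ, 3 ≤ r → r - 1 ≤ n →
      2 ^ 2 ^ n < (sylvester (n + 2 - r) - 1) ^ ((2 ^ r - 1) * n - 1) := by
    intro r n hr hn
    obtain ⟨s, hs⟩ : ∃ s, n + 2 - r = s + 1 := ⟨n + 1 - r, by omega⟩
    rw [hs]
    have hlow := sylvester_lower s
    have hs' : n = s + (r - 1) := by omega
    set E := (2 ^ r - 1) * n - 1 with hE
    have hEn : 2 ^ n < 2 ^ s * E := by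
      have h1 : 2 ^ n = 2 ^ s * 2 ^ (r - 1) := by rw [hs', pow_add]
      rw [h1]
      have hlt : 2 ^ (r - 1) < E := by
        have h2 : 2 ≤ n := by omega
        have h3 : (2 ^ r - 1) * 2 ≤ (2 ^ r - 1) * n := by
          exact Nat.mul_le_mul_left _ h2
        have h4 : 2 ^ r = 2 * 2 ^ (r - 1) := by
          rw [← pow_succ']
          congr 1; omega
        have h5 : 4 ≤ 2 ^ (r - 1) := by
          calc (4:ℕ) = 2 ^ 2 := rfl
          _ ≤ 2 ^ (r-1) := Nat.pow_le_pow_right (by norm_num) (by omega)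
        omega
      exact Nat.mul_lt_mul_of_le_of_lt (le_refl _) hlt (by positivity)
    calc 2 ^ 2 ^ n < 2 ^ (2 ^ s * E) := Nat.pow_lt_pow_right (by norm_num) hEn
      _ = (2 ^ 2 ^ s) ^ E := by rw [pow_mul]
      _ ≤ (sylvester (s+1) - 1) ^ E := Nat.pow_le_pow_left hlow E
  refine ⟨fun r n _ hr hn => main r n hr hn, fun n hn => ?_⟩
  have h := main 3 n (by norm_num) (by omega)
  have h1 : n + 2 - 3 = n - 1 := by omega
  have h2 : (2:ℕ)^3 - 1 = 7 := by norm_num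
  rw [h1, h2] at h
  exact h
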